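/- For every t ≥ 1, every natural number N, and every real x with x ≥ t, the truncated Chebyshev expansion satisfies f_N(x) = I_0(t) + 2·Σ_{n=1}^{N} I_n(t)·T_n(x/t) ≤ e^x. -/

import Mathlib

open Polynomial

/-- The modified Bessel function of the first kind of integer order `n`. -/
noncomputable def besselI (n : ℕ) (t : ℝ) : ℝ :=
  ∑' m : ℕ, (1 / ((m.factorial : ℝ) * ((m + n).factorial : ℝ))) * (t / 2) ^ (2 * m + n)

/-- The degree-`N` Chebyshev truncation of `e^x` on `[-t, t]`. -/
noncomputable def chebTruncExp (t : ℝ) (N : ℕ) (x : ℝ) : ℝ :=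
  besselI 0 t + 2 * ∑ n ∈ Finset.Icc 1 N, besselI n t *
    (Polynomial.Chebyshev.T ℝ (n : ℤ)).eval (x / t)

/-!
Write `x / t = cosh θ` with `θ ≥ 0`. Multiplying the exponential series of `t e^θ / 2` and
`t e^{-θ} / 2` and summing the double series along the diagonals `a - b = n` gives the generating
function `e^{t cosh θ} = ∑_{n ∈ ℤ} I_{|n|}(t) e^{nθ}`. As `T_n(cosh θ) = cosh (nθ)`, pairing the
terms `n` and `-n` exhibits `f_N(x) + I_0(t)` as a partial sum of a series of nonnegative terms
with sum `e^x + I_0(t)`.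
-/

open Real

theorem Real.hasSum_pow_div_factorial_mul_pow_div_factorial (u v : ℝ) :
    HasSum (fun p : ℕ × ℕ => u ^ p.1 / p.1.factorial * (v ^ p.2 / p.2.factorial))
      (exp (u + v)) := by
  have hs : Summable fun p : ℕ × ℕ => u ^ p.1 / p.1.factorial * (v ^ p.2 / p.2.factorial) :=
    summable_mul_of_summable_norm (summable_pow_div_factorial u).norm
      (summable_pow_div_factorial v).norm
  have h := (NormedSpace.expSeries_div_hasSum_exp u).mul (NormedSpace.expSeries_div_hasSum_exp v) hs
  rw [← exp_eq_exp_ℝ, ← exp_add] at h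
  exact h

/-- `(n, m)` is sent to the `m`-th lattice point on the diagonal `a - b = n`. -/
def diagEquiv : ℤ × ℕ ≃ ℕ × ℕ where
  toFun q := (q.2 + q.1.toNat, q.2 + (-q.1).toNat)
  invFun p := ((p.1 : ℤ) - p.2, min p.1 p.2)
  left_inv q := by ext <;> simp; omega
  right_inv p := by ext <;> simp <;> omega

theorem pow_div_factorial_mul_pow_div_factorial_diag (t θ : ℝ) (k m : ℕ) :
    (t * exp θ / 2) ^ (m + k) / (m + k).factorial * ((t * exp (-θ) / 2) ^ m / m.factorial) =
      1 / (m.factorial * (m + k).factorial) * (t / 2) ^ (2 * m + k) * exp (k * θ) := by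
  have hexp : exp θ ^ (m + k) * exp (-θ) ^ m = exp (k * θ) := by
    rw [← exp_nat_mul, ← exp_nat_mul, ← exp_add]
    congr 1
    push_cast
    ring
  calc _ = (t / 2) ^ (m + k + m) * (exp θ ^ (m + k) * exp (-θ) ^ m)
          / (m.factorial * (m + k).factorial) := by ring
    _ = _ := by rw [hexp, show m + k + m = 2 * m + k by ring]; ring

theorem hasSum_besselI_mul_exp (t θ : ℝ) :
    HasSum (fun n : ℤ => besselI n.natAbs t * exp (n * θ)) (exp (t * cosh θ)) := by
  have hf := hasSum_pow_div_factorial_mul_pow_div_factorial (t * exp θ / 2) (t * exp (-θ) / 2)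
  rw [show t * exp θ / 2 + t * exp (-θ) / 2 = t * cosh θ by rw [cosh_eq]; ring] at hf
  have hg := diagEquiv.hasSum_iff.mpr hf
  refine hg.prod_fiberwise fun n => (hg.summable.prod_factor n).hasSum_iff.mpr ?_
  obtain ⟨k, rfl | rfl⟩ := Int.eq_nat_or_neg n
  · simp only [Int.natAbs_natCast, Int.cast_natCast, besselI, ← tsum_mul_right]
    refine tsum_congr fun m => ?_
    have hdiag : diagEquiv (k, m) = (m + k, m) := by simp [diagEquiv]
    rw [Function.comp_apply, hdiag, pow_div_factorial_mul_pow_div_factorial_diag]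
  · simp only [Int.natAbs_neg, Int.natAbs_natCast, Int.cast_neg, Int.cast_natCast, besselI,
      ← tsum_mul_right]
    refine tsum_congr fun m => ?_
    have hdiag : diagEquiv (-k, m) = (m, m + k) := by simp [diagEquiv]
    have h := pow_div_factorial_mul_pow_div_factorial_diag t (-θ) k m
    rw [neg_neg, mul_neg, ← neg_mul] at h
    rw [Function.comp_apply, hdiag, mul_comm, h]

theorem hasSum_two_mul_besselI_mul_cosh (t θ : ℝ) :
    HasSum (fun n : ℕ => 2 * besselI n t * cosh (n * θ)) (exp (t * cosh θ) + besselI 0 t) := by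
  have h := (hasSum_besselI_mul_exp t θ).nat_add_neg
  simp only [Int.natAbs_zero, Int.cast_zero, zero_mul, exp_zero, mul_one] at h
  refine h.congr_fun fun n => ?_
  simp only [Int.natAbs_neg, Int.natAbs_natCast, Int.cast_neg, Int.cast_natCast, cosh_eq, neg_mul]
  ring

theorem besselI_nonneg (n : ℕ) {t : ℝ} (ht : 0 ≤ t) : 0 ≤ besselI n t :=
  tsum_nonneg fun m => by positivity

theorem chebTruncExp_add_besselI_zero (t : ℝ) (N : ℕ) (x : ℝ) :
    chebTruncExp t N x + besselI 0 t =
      ∑ n ∈ Finset.range (N + 1), 2 * besselI n t * (Chebyshev.T ℝ n).eval (x / t) := by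
  rw [Finset.sum_range_eq_add_Ico _ (by omega : 0 < N + 1), Finset.Ico_add_one_right_eq_Icc,
    chebTruncExp, Finset.mul_sum]
  simp only [Nat.cast_zero, Chebyshev.T_zero, eval_one, mul_assoc]
  ring

theorem chebTruncExp_le_exp_of_ge (t : ℝ) (ht : 1 ≤ t) (N : ℕ) (x : ℝ) (hx : t ≤ x) :
    chebTruncExp t N x ≤ Real.exp x := by
  have ht0 : 0 < t := by linarith
  have hc : 1 ≤ x / t := (one_le_div ht0).mpr hx
  set θ := arcosh (x / t)
  have hθ : t * cosh θ = x := by rw [cosh_arcosh hc]; field_simp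
  have hT (n : ℕ) : (Chebyshev.T ℝ n).eval (x / t) = cosh (n * θ) := by
    rw [← cosh_arcosh hc, Chebyshev.T_real_cosh, Int.cast_natCast]
  have hsum := hasSum_two_mul_besselI_mul_cosh t θ
  rw [hθ] at hsum
  have hle := sum_le_hasSum (Finset.range (N + 1))
    (fun n _ => mul_nonneg (mul_nonneg two_pos.le (besselI_nonneg n ht0.le)) (cosh_pos _).le) hsum
  simp only [← hT, ← chebTruncExp_add_besselI_zero] at hle
  linarith
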